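/- Let σ > 0, β > 0, and consider the scalar smoothed spectral gradient flow ȧ = −f_β((ab−σ)b), ḃ = −f_β((ab−σ)a) with f_β(x) = x/√(x²+β), with initial conditions 0 ≤ a(0), b(0), a(0)·b(0) < σ, and not both zero. Then the solution exists for all t ≥ 0 and converges: a(t)·b(t) → σ as t → ∞. -/

import Mathlib

open Set Filter

/-- `f_β(x) = x / √(x² + β)`. -/
noncomputable def fbeta (β x : ℝ) : ℝ := x / Real.sqrt (x ^ 2 + β)

lemma sqrt_sq_add_pos {β : ℝ} (hβ : 0 < β) (x : ℝ) : 0 < Real.sqrt (x ^ 2 + β) :=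
  Real.sqrt_pos.2 (by positivity)

lemma fbeta_nonpos {β : ℝ} (hβ : 0 < β) {x : ℝ} (hx : x ≤ 0) : fbeta β x ≤ 0 :=
  div_nonpos_of_nonpos_of_nonneg hx (Real.sqrt_nonneg _)

lemma fbeta_neg' {β : ℝ} (hβ : 0 < β) {x : ℝ} (hx : x < 0) : fbeta β x < 0 :=
  div_neg_of_neg_of_pos hx (sqrt_sq_add_pos hβ x)

lemma fbeta_odd (β x : ℝ) : fbeta β (-x) = -fbeta β x := by
  unfold fbeta
  rw [neg_sq, neg_div]

lemma fbeta_hasDerivAt {β : ℝ} (hβ : 0 < β) (z : ℝ) :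
    HasDerivAt (fbeta β) ((Real.sqrt (z ^ 2 + β) - z * (1 / (2 * Real.sqrt (z ^ 2 + β)) * (2 * z)))
      / Real.sqrt (z ^ 2 + β) ^ 2) z := by
  have h1 : HasDerivAt (fun x : ℝ => x ^ 2 + β) (2 * z) z := by
    simpa using ((hasDerivAt_pow 2 z).add_const β)
  have h2 : HasDerivAt (fun x : ℝ => Real.sqrt (x ^ 2 + β))
      (1 / (2 * Real.sqrt (z ^ 2 + β)) * (2 * z)) z :=
    (Real.hasDerivAt_sqrt (by positivity)).comp z h1
  have h3 := (hasDerivAt_id' z).div h2 (sqrt_sq_add_pos hβ z).ne'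
  exact h3.congr_deriv (by ring)

lemma fbeta_deriv_bound {β : ℝ} (hβ : 0 < β) (z : ℝ) :
    ‖(Real.sqrt (z ^ 2 + β) - z * (1 / (2 * Real.sqrt (z ^ 2 + β)) * (2 * z)))
      / Real.sqrt (z ^ 2 + β) ^ 2‖ ≤ 1 / Real.sqrt β := by
  set s := Real.sqrt (z ^ 2 + β) with hs
  have hspos : 0 < s := sqrt_sq_add_pos hβ z
  have hs2 : s ^ 2 = z ^ 2 + β := Real.sq_sqrt (by positivity)
  have hβs : Real.sqrt β ≤ s := Real.sqrt_le_sqrt (by nlinarith [sq_nonneg z])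
  have hβpos : 0 < Real.sqrt β := Real.sqrt_pos.2 hβ
  have hval : (s - z * (1 / (2 * s) * (2 * z))) / s ^ 2 = β / s ^ 3 := by
    rw [div_eq_div_iff (by positivity) (by positivity)]
    field_simp
    linear_combination hs2
  rw [hval, Real.norm_eq_abs, abs_of_nonneg (by positivity)]
  rw [div_le_div_iff₀ (by positivity) hβpos]
  have : Real.sqrt β * (z ^ 2 + β) ≤ s ^ 3 := by
    calc Real.sqrt β * (z ^ 2 + β) = Real.sqrt β * s ^ 2 := by rw [hs2]
    _ ≤ s * s ^ 2 := by nlinarith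
    _ = s ^ 3 := by ring
  have hβsq : Real.sqrt β * Real.sqrt β = β := Real.mul_self_sqrt hβ.le
  nlinarith [sq_nonneg z]

lemma fbeta_lipschitz {β : ℝ} (hβ : 0 < β) (x y : ℝ) :
    |fbeta β x - fbeta β y| ≤ |x - y| / Real.sqrt β := by
  have := Convex.norm_image_sub_le_of_norm_hasDerivWithin_le
    (f := fbeta β) (s := univ)
    (f' := fun z => (Real.sqrt (z ^ 2 + β) - z * (1 / (2 * Real.sqrt (z ^ 2 + β)) * (2 * z)))
      / Real.sqrt (z ^ 2 + β) ^ 2)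
    (fun z _ => (fbeta_hasDerivAt hβ z).hasDerivWithinAt)
    (fun z _ => fbeta_deriv_bound hβ z) convex_univ (mem_univ y) (mem_univ x)
  rw [Real.norm_eq_abs, Real.norm_eq_abs] at this
  rw [div_eq_inv_mul, ← one_div]
  exact this

lemma fbeta_add_abs_le {β : ℝ} (hβ : 0 < β) (x y : ℝ) :
    |fbeta β x + fbeta β y| ≤ |x + y| / Real.sqrt β := by
  have h := fbeta_lipschitz hβ x (-y)
  rw [fbeta_odd, sub_neg_eq_add, sub_neg_eq_add] at h
  exact h

lemma monoOn_aux (r : ℝ) (v v' : ℝ → ℝ)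
    (hv : ∀ t ∈ Ici r, HasDerivWithinAt v (v' t) (Ici r) t)
    (h' : ∀ t ∈ Ioi r, 0 ≤ v' t) : MonotoneOn v (Ici r) := by
  apply monotoneOn_of_deriv_nonneg (convex_Ici r) (fun t ht => (hv t ht).continuousWithinAt)
  · intro t ht
    rw [interior_Ici] at ht
    exact ((hv t (mem_Ici.2 (mem_Ioi.1 ht).le)).hasDerivAt
      (Ici_mem_nhds ht)).differentiableAt.differentiableWithinAt
  · intro t ht
    rw [interior_Ici] at ht
    rw [((hv t (mem_Ici.2 (mem_Ioi.1 ht).le)).hasDerivAt (Ici_mem_nhds ht)).deriv]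
    exact h' t ht

lemma antiOn_aux (r : ℝ) (v v' : ℝ → ℝ)
    (hv : ∀ t ∈ Ici r, HasDerivWithinAt v (v' t) (Ici r) t)
    (h' : ∀ t ∈ Ioi r, v' t ≤ 0) : AntitoneOn v (Ici r) := by
  apply antitoneOn_of_deriv_nonpos (convex_Ici r) (fun t ht => (hv t ht).continuousWithinAt)
  · intro t ht
    rw [interior_Ici] at ht
    exact ((hv t (mem_Ici.2 (mem_Ioi.1 ht).le)).hasDerivAt
      (Ici_mem_nhds ht)).differentiableAt.differentiableWithinAt
  · intro t ht
    rw [interior_Ici] at ht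
    rw [((hv t (mem_Ici.2 (mem_Ioi.1 ht).le)).hasDerivAt (Ici_mem_nhds ht)).deriv]
    exact h' t ht

lemma pos_of_ode (v v' C : ℝ → ℝ)
    (hv : ∀ t ∈ Ici (0:ℝ), HasDerivWithinAt v (v' t) (Ici 0) t)
    (hC : ContinuousOn C (Ici 0))
    (hbound : ∀ t ∈ Ici (0:ℝ), |v' t| ≤ C t * |v t|)
    (h0 : 0 < v 0) : ∀ t ∈ Ici (0:ℝ), 0 < v t := by
  intro t₁ ht₁
  by_contra hneg
  push_neg at hneg
  have hvc : ContinuousOn v (Ici 0) := fun t ht => (hv t ht).continuousWithinAt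
  obtain ⟨t₀, ht₀mem, hvt₀⟩ : ∃ t₀ ∈ Icc (0:ℝ) t₁, v t₀ = 0 := by
    have h := intermediate_value_Icc' ht₁ (hvc.mono (Icc_subset_Ici_self))
    obtain ⟨t₀, h1, h2⟩ := h ⟨hneg, h0.le⟩
    exact ⟨t₀, h1, h2⟩
  have ht₀pos : 0 < t₀ := lt_of_le_of_ne ht₀mem.1 (by rintro rfl; exact h0.ne' hvt₀)
  obtain ⟨L₀, hL₀⟩ : ∃ L, ∀ s ∈ Icc (0:ℝ) t₀, C s ≤ L := by
    have hcomp : IsCompact ((fun s => C s) '' Icc (0:ℝ) t₀) :=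
      isCompact_Icc.image_of_continuousOn (hC.mono (Icc_subset_Ici_self))
    obtain ⟨L, hL⟩ := hcomp.bddAbove
    exact ⟨L, fun s hs => hL (mem_image_of_mem _ hs)⟩
  set L := max L₀ 0 with hLdef
  set w : ℝ → ℝ := fun s => v (t₀ - s) with hwdef
  have hmaps : ∀ s ∈ Icc (0:ℝ) t₀, t₀ - s ∈ Ici (0:ℝ) := fun s hs => by
    simp only [mem_Ici]; linarith [hs.2]
  have hwc : ContinuousOn w (Icc 0 t₀) :=
    hvc.comp ((continuous_const.sub continuous_id).continuousOn) hmaps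
  have hw' : ∀ s ∈ Ico (0:ℝ) t₀, HasDerivWithinAt w (-(v' (t₀ - s))) (Ici s) s := by
    intro s hs
    have hp : 0 < t₀ - s := by linarith [hs.2]
    have hd : HasDerivAt v (v' (t₀ - s)) (t₀ - s) :=
      (hv _ hp.le).hasDerivAt (Ici_mem_nhds hp)
    have hinner : HasDerivAt (fun s : ℝ => t₀ - s) (-1) s := by
      simpa using (hasDerivAt_id s).const_sub t₀
    have := hd.comp s hinner
    exact this.hasDerivWithinAt.congr_deriv (by ring)
  have hbd : ∀ s ∈ Ico (0:ℝ) t₀, ‖-(v' (t₀ - s))‖ ≤ L * ‖w s‖ + 0 := by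
    intro s hs
    have hp : 0 < t₀ - s := by linarith [hs.2]
    rw [norm_neg, Real.norm_eq_abs, add_zero]
    calc |v' (t₀ - s)| ≤ C (t₀ - s) * |v (t₀ - s)| := hbound _ hp.le
      _ ≤ L * |v (t₀ - s)| := by
          apply mul_le_mul_of_nonneg_right _ (abs_nonneg _)
          exact le_trans (hL₀ _ ⟨hp.le, by linarith [hs.1]⟩) (le_max_left _ _)
      _ = L * ‖w s‖ := by rw [Real.norm_eq_abs]
  have hg := norm_le_gronwallBound_of_norm_deriv_right_le (δ := 0) hwc hw'
    (by simp [w, hvt₀]) hbd t₀ ⟨ht₀pos.le, le_refl _⟩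
  rw [gronwallBound_ε0, zero_mul] at hg
  have : v 0 = 0 := by
    have hw0 : w t₀ = v 0 := by simp [w]
    have := le_antisymm (by simpa using hg) (norm_nonneg (w t₀))
    rwa [hw0, norm_eq_zero] at this
  exact h0.ne' this

lemma aux_pos_one (σ β : ℝ) (hσ : 0 < σ) (hβ : 0 < β) (a b : ℝ → ℝ)
    (hb : ∀ t ∈ Ici (0:ℝ), HasDerivWithinAt b (-(fbeta β ((a t * b t - σ) * a t))) (Ici 0) t)
    (hbnn : ∀ t ∈ Ici (0:ℝ), 0 ≤ b t) (hbmono : MonotoneOn b (Ici 0))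
    (hapos : 0 < a (1/2 : ℝ)) : 0 < b 1 := by
  by_contra h
  push_neg at h
  have hb1 : b 1 = 0 := le_antisymm h (hbnn 1 (by norm_num))
  have hbz : ∀ s ∈ Icc (0:ℝ) 1, b s = 0 := fun s hs =>
    le_antisymm (hb1 ▸ hbmono hs.1 (by norm_num) hs.2) (hbnn s hs.1)
  have hhalf : b (1/2:ℝ) = 0 := hbz _ (by norm_num)
  have hd : HasDerivAt b (-(fbeta β ((a (1/2:ℝ) * b (1/2:ℝ) - σ) * a (1/2:ℝ)))) (1/2:ℝ) :=
    (hb _ (by norm_num)).hasDerivAt (Ici_mem_nhds (by norm_num))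
  have hev : b =ᶠ[nhds (1/2:ℝ)] fun _ => 0 := by
    filter_upwards [Ioo_mem_nhds (by norm_num : (0:ℝ) < 1/2) (by norm_num : (1/2:ℝ) < 1)]
      with s hs
    exact hbz s ⟨hs.1.le, hs.2.le⟩
  have hzero : HasDerivAt b 0 (1/2:ℝ) :=
    (hasDerivAt_const (1/2:ℝ) (0:ℝ)).congr_of_eventuallyEq hev
  have huniq := hd.unique hzero
  have harg : (a (1/2:ℝ) * b (1/2:ℝ) - σ) * a (1/2:ℝ) < 0 := by
    rw [hhalf, mul_zero, zero_sub]
    exact mul_neg_of_neg_of_pos (by linarith) hapos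
  linarith [fbeta_neg' hβ harg]

/-- Scalar smoothed spectral gradient flow `ȧ = −f_β((ab−σ)b)`,
`ḃ = −f_β((ab−σ)a)` with `0 ≤ a(0), b(0)`, not both zero, and `a(0)b(0) < σ`:
any global solution converges, with `a(t)·b(t) → σ` as `t → ∞`. -/
theorem scalar_smoothed_flow_converges (σ β : ℝ) (hσ : 0 < σ) (hβ : 0 < β)
    (a b : ℝ → ℝ)
    (ha : ∀ t ∈ Ici (0 : ℝ),
      HasDerivWithinAt a (-(fbeta β ((a t * b t - σ) * b t))) (Ici 0) t)
    (hb : ∀ t ∈ Ici (0 : ℝ),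
      HasDerivWithinAt b (-(fbeta β ((a t * b t - σ) * a t))) (Ici 0) t)
    (ha0 : 0 ≤ a 0) (hb0 : 0 ≤ b 0) (hne : ¬(a 0 = 0 ∧ b 0 = 0))
    (hab0 : a 0 * b 0 < σ) :
    Tendsto (fun t => a t * b t) atTop (nhds σ) := by
  set c : ℝ → ℝ := fun t => (b t) ^ 2 / Real.sqrt (((a t * b t - σ) * b t) ^ 2 + β)
      + (a t) ^ 2 / Real.sqrt (((a t * b t - σ) * a t) ^ 2 + β) with hcdef
  -- continuity
  have hac : ContinuousOn a (Ici 0) := fun t ht => (ha t ht).continuousWithinAt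
  have hbc : ContinuousOn b (Ici 0) := fun t ht => (hb t ht).continuousWithinAt
  have hgc : ContinuousOn (fun t => a t * b t) (Ici 0) := hac.mul hbc
  have hcc : ContinuousOn c (Ici 0) := by
    apply ContinuousOn.add
    · apply ContinuousOn.div (hbc.pow 2)
      · exact Real.continuous_sqrt.comp_continuousOn
          ((((hgc.sub continuousOn_const).mul hbc).pow 2).add continuousOn_const)
      · exact fun t ht => (sqrt_sq_add_pos hβ _).ne'
    · apply ContinuousOn.div (hac.pow 2)
      · exact Real.continuous_sqrt.comp_continuousOn
          ((((hgc.sub continuousOn_const).mul hac).pow 2).add continuousOn_const)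
      · exact fun t ht => (sqrt_sq_add_pos hβ _).ne'
  have hcnn : ∀ t, 0 ≤ c t := fun t =>
    add_nonneg (div_nonneg (sq_nonneg _) (Real.sqrt_nonneg _))
      (div_nonneg (sq_nonneg _) (Real.sqrt_nonneg _))
  -- derivative of g = a*b
  have hgd : ∀ t ∈ Ici (0:ℝ),
      HasDerivWithinAt (fun t => a t * b t) ((σ - a t * b t) * c t) (Ici 0) t := by
    intro t ht
    have h := (ha t ht).mul (hb t ht)
    refine h.congr_deriv ?_
    have s1 := sqrt_sq_add_pos hβ ((a t * b t - σ) * b t)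
    have s2 := sqrt_sq_add_pos hβ ((a t * b t - σ) * a t)
    simp only [hcdef, fbeta]
    field_simp
    ring
  -- u := σ - g is positive
  have hu : ∀ t ∈ Ici (0:ℝ), 0 < σ - a t * b t := by
    apply pos_of_ode _ (fun t => -((σ - a t * b t) * c t)) c _ hcc
    · intro t ht
      rw [abs_neg, abs_mul, abs_of_nonneg (by linarith [hcnn t] : (0:ℝ) ≤ c t), mul_comm]
    · exact sub_pos.2 hab0
    · intro t ht
      simpa using (hgd t ht).const_sub σ
  -- a + b is positive
  have hs0 : 0 < a 0 + b 0 := by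
    by_contra h
    push_neg at h
    exact hne ⟨by linarith, by linarith⟩
  have hsum : ∀ t ∈ Ici (0:ℝ), 0 < a t + b t := by
    apply pos_of_ode _
      (fun t => -(fbeta β ((a t * b t - σ) * b t)) + -(fbeta β ((a t * b t - σ) * a t)))
      (fun t => |a t * b t - σ| / Real.sqrt β) _
      (((hgc.sub continuousOn_const).abs).div_const _) _ hs0
    · intro t ht
      exact (ha t ht).add (hb t ht)
    · intro t ht
      rw [← neg_add, abs_neg]
      calc |fbeta β ((a t * b t - σ) * b t) + fbeta β ((a t * b t - σ) * a t)|
          ≤ |(a t * b t - σ) * b t + (a t * b t - σ) * a t| / Real.sqrt β :=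
            fbeta_add_abs_le hβ _ _
        _ = |a t * b t - σ| * |b t + a t| / Real.sqrt β := by rw [← mul_add, abs_mul]
        _ = |a t * b t - σ| / Real.sqrt β * |a t + b t| := by
            rw [add_comm (b t)]; ring
  -- g monotone, hence nonneg
  have hgmono : MonotoneOn (fun t => a t * b t) (Ici 0) :=
    monoOn_aux 0 _ (fun t => (σ - a t * b t) * c t) hgd
      (fun t ht => mul_nonneg (hu t (mem_Ici.2 (mem_Ioi.1 ht).le)).le (hcnn t))
  have hgnn : ∀ t ∈ Ici (0:ℝ), 0 ≤ a t * b t := fun t ht =>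
    le_trans (mul_nonneg ha0 hb0) (hgmono self_mem_Ici ht ht)
  -- a, b nonneg
  have hann : ∀ t ∈ Ici (0:ℝ), 0 ≤ a t := by
    intro t ht
    by_contra h
    push_neg at h
    nlinarith [hgnn t ht, hsum t ht, sq_nonneg (a t)]
  have hbnn : ∀ t ∈ Ici (0:ℝ), 0 ≤ b t := by
    intro t ht
    by_contra h
    push_neg at h
    nlinarith [hgnn t ht, hsum t ht, sq_nonneg (b t)]
  -- a, b monotone
  have hamono : MonotoneOn a (Ici 0) := by
    apply monoOn_aux 0 a (fun t => -(fbeta β ((a t * b t - σ) * b t))) ha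
    intro t ht
    have harg : (a t * b t - σ) * b t ≤ 0 :=
      mul_nonpos_of_nonpos_of_nonneg (by linarith [hu t (mem_Ici.2 (mem_Ioi.1 ht).le)]) (hbnn t (mem_Ici.2 (mem_Ioi.1 ht).le))
    linarith [fbeta_nonpos hβ harg]
  have hbmono : MonotoneOn b (Ici 0) := by
    apply monoOn_aux 0 b (fun t => -(fbeta β ((a t * b t - σ) * a t))) hb
    intro t ht
    have harg : (a t * b t - σ) * a t ≤ 0 :=
      mul_nonpos_of_nonpos_of_nonneg (by linarith [hu t (mem_Ici.2 (mem_Ioi.1 ht).le)]) (hann t (mem_Ici.2 (mem_Ioi.1 ht).le))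
    linarith [fbeta_nonpos hβ harg]
  -- a 1 > 0 and b 1 > 0
  have ha' : ∀ t ∈ Ici (0:ℝ), HasDerivWithinAt a (-(fbeta β ((b t * a t - σ) * b t))) (Ici 0) t := by
    intro t ht
    have := ha t ht
    rwa [mul_comm (a t) (b t)] at this
  have hAB1 : 0 < a 1 ∧ 0 < b 1 := by
    rcases lt_or_ge 0 (a 0) with h | h
    · have hapos : 0 < a (1/2:ℝ) :=
        lt_of_lt_of_le h (hamono self_mem_Ici (by norm_num) (by norm_num))
      refine ⟨lt_of_lt_of_le h (hamono self_mem_Ici (by norm_num) (by norm_num)), ?_⟩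
      exact aux_pos_one σ β hσ hβ a b hb hbnn hbmono hapos
    · have hb0pos : 0 < b 0 := by linarith [hs0]
      have hbpos : 0 < b (1/2:ℝ) :=
        lt_of_lt_of_le hb0pos (hbmono self_mem_Ici (by norm_num) (by norm_num))
      refine ⟨?_, lt_of_lt_of_le hb0pos (hbmono self_mem_Ici (by norm_num) (by norm_num))⟩
      exact aux_pos_one σ β hσ hβ b a ha' hann hamono hbpos
  obtain ⟨hA1, hB1⟩ := hAB1
  -- bounds for t ≥ 1
  set M := max (σ / b 1) (σ / a 1) with hMdef
  have hMpos : 0 < M := lt_of_lt_of_le (div_pos hσ hB1) (le_max_left _ _)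
  set δ := min (a 1) (b 1) with hδdef
  have hδpos : 0 < δ := lt_min hA1 hB1
  set K := Real.sqrt (σ ^ 2 * M ^ 2 + β) with hKdef
  have hKpos : 0 < K := Real.sqrt_pos.2 (by positivity)
  set k := δ ^ 2 / K with hkdef
  have hkpos : 0 < k := div_pos (by positivity) hKpos
  have one_mem : (1:ℝ) ∈ Ici (0:ℝ) := by norm_num
  have hck : ∀ t ∈ Ici (1:ℝ), k ≤ c t := by
    intro t ht
    have h0t : t ∈ Ici (0:ℝ) := mem_Ici.2 (le_trans (by norm_num) (mem_Ici.1 ht))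
    have hb_lb : δ ≤ b t := le_trans (min_le_right _ _) (hbmono one_mem h0t ht)
    have hbub : b t ≤ M := by
      have hAle : a 1 ≤ a t := hamono one_mem h0t ht
      have h1 : b t * a 1 ≤ a t * b t := by
        have := mul_le_mul_of_nonneg_left hAle (hbnn t h0t)
        linarith [this, mul_comm (b t) (a t)]
      have h2 : b t * a 1 < σ := lt_of_le_of_lt h1 (by linarith [hu t h0t])
      have : b t ≤ σ / a 1 := by
        rw [le_div_iff₀ hA1]; linarith
      exact le_trans this (le_max_right _ _)
    have h1 : |a t * b t - σ| ≤ σ := by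
      rw [abs_le]
      constructor
      · linarith [hgnn t h0t]
      · linarith [hu t h0t]
    have h2 : |b t| ≤ M := by rwa [abs_of_nonneg (hbnn t h0t)]
    have e1 : (a t * b t - σ) ^ 2 ≤ σ ^ 2 := by
      rw [← sq_abs]; exact pow_le_pow_left₀ (abs_nonneg _) h1 2
    have e2 : (b t) ^ 2 ≤ M ^ 2 := by
      rw [← sq_abs]; exact pow_le_pow_left₀ (abs_nonneg _) h2 2
    have harg : ((a t * b t - σ) * b t) ^ 2 ≤ σ ^ 2 * M ^ 2 := by
      calc ((a t * b t - σ) * b t) ^ 2 = (a t * b t - σ) ^ 2 * (b t) ^ 2 := by ring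
        _ ≤ σ ^ 2 * M ^ 2 := mul_le_mul e1 e2 (sq_nonneg _) (sq_nonneg σ)
    have hsqle : Real.sqrt (((a t * b t - σ) * b t) ^ 2 + β) ≤ K :=
      Real.sqrt_le_sqrt (by linarith)
    have hterm : δ ^ 2 / K ≤ (b t) ^ 2 / Real.sqrt (((a t * b t - σ) * b t) ^ 2 + β) :=
      div_le_div₀ (sq_nonneg _) (by nlinarith [hb_lb, hδpos]) (sqrt_sq_add_pos hβ _) hsqle
    calc k = δ ^ 2 / K := rfl
      _ ≤ (b t) ^ 2 / Real.sqrt (((a t * b t - σ) * b t) ^ 2 + β) := hterm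
      _ ≤ c t := le_add_of_nonneg_right (div_nonneg (sq_nonneg _) (Real.sqrt_nonneg _))
  -- φ = u * exp(k t) antitone on Ici 1
  have hφd : ∀ t ∈ Ici (1:ℝ),
      HasDerivWithinAt (fun t => (σ - a t * b t) * Real.exp (k * t))
        (-((σ - a t * b t) * c t) * Real.exp (k * t)
          + (σ - a t * b t) * (Real.exp (k * t) * k)) (Ici 1) t := by
    intro t ht
    have h0t : t ∈ Ici (0:ℝ) := mem_Ici.2 (le_trans (by norm_num) (mem_Ici.1 ht))
    have hu' : HasDerivWithinAt (fun t => σ - a t * b t) (-((σ - a t * b t) * c t)) (Ici 1) t := by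
      have := ((hgd t h0t).const_sub σ).mono (Ici_subset_Ici.2 (by norm_num : (0:ℝ) ≤ 1))
      simpa using this
    have hexp : HasDerivAt (fun t : ℝ => Real.exp (k * t)) (Real.exp (k * t) * k) t := by
      have h1 : HasDerivAt (fun t : ℝ => k * t) k t := by
        simpa using (hasDerivAt_id t).const_mul k
      exact h1.exp
    exact hu'.mul hexp.hasDerivWithinAt
  have hφanti : AntitoneOn (fun t => (σ - a t * b t) * Real.exp (k * t)) (Ici 1) := by
    apply antiOn_aux 1 _ _ hφd
    intro t ht
    have h1t : t ∈ Ici (1:ℝ) := mem_Ici.2 (mem_Ioi.1 ht).le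
    have h0t : t ∈ Ici (0:ℝ) := mem_Ici.2 (le_trans (by norm_num) (mem_Ici.1 h1t))
    have h1 : 0 < σ - a t * b t := hu t h0t
    have h2 : k ≤ c t := hck t h1t
    have h3 : 0 < Real.exp (k * t) := Real.exp_pos _
    nlinarith [mul_nonneg (mul_nonneg h1.le h3.le) (sub_nonneg.2 h2)]
  -- decay estimate
  have hdecay : ∀ t ∈ Ici (1:ℝ),
      σ - a t * b t ≤ (σ - a 1 * b 1) * Real.exp (k * 1) * Real.exp (-(k * t)) := by
    intro t ht
    have hφ := hφanti self_mem_Ici ht ht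
    calc σ - a t * b t
        = (σ - a t * b t) * Real.exp (k * t) * Real.exp (-(k * t)) := by
          rw [mul_assoc, ← Real.exp_add, add_neg_cancel, Real.exp_zero, mul_one]
      _ ≤ (σ - a 1 * b 1) * Real.exp (k * 1) * Real.exp (-(k * t)) :=
          mul_le_mul_of_nonneg_right hφ (Real.exp_pos _).le
  -- squeeze
  have hexp0 : Tendsto (fun t => Real.exp (-(k * t))) atTop (nhds 0) :=
    Real.tendsto_exp_atBot.comp
      (tendsto_neg_atTop_atBot.comp (Tendsto.const_mul_atTop hkpos tendsto_id))
  have hlow : Tendsto (fun t => σ - (σ - a 1 * b 1) * Real.exp (k * 1) * Real.exp (-(k * t)))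
      atTop (nhds σ) := by
    have := tendsto_const_nhds (x := σ) (f := atTop (α := ℝ)) |>.sub
      (hexp0.const_mul ((σ - a 1 * b 1) * Real.exp (k * 1)))
    simpa [mul_assoc] using this
  apply tendsto_of_tendsto_of_tendsto_of_le_of_le' hlow tendsto_const_nhds
  · filter_upwards [eventually_ge_atTop (1:ℝ)] with t ht
    linarith [hdecay t ht]
  · filter_upwards [eventually_ge_atTop (0:ℝ)] with t ht
    linarith [hu t ht]
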